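/- arXiv:1804.08824 — 3 statements merged into one kernel-verified Lean document; each statement's English description precedes it below -/
import Mathlib

section
/- If x : [0,∞) → ℝ₊ is continuous, α > 0, λ₁ > λ₂ > 0, and for every t ≥ 0 we have x(t) ≤ α + λ₂∫₀ᵗ e^{−λ₁(t−s)} x(s) ds, then x(t) ≤ α λ₁/(λ₁ − λ₂) for all t ≥ 0. -/
/-!
On `[0, t]` the continuous function `x` attains its maximum at some `c`. Bounding `x s` by `x c`
under the integral and using `∫₀ᶜ e^{-λ₁(c-s)} ds ≤ 1/λ₁` turns the hypothesis at `c` into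
`x c ≤ α + λ₂ x c / λ₁`, that is `x c ≤ α λ₁ / (λ₁ - λ₂)`; and `x t ≤ x c`.
-/

open MeasureTheory intervalIntegral

open Real Set

theorem integral_exp_neg_mul_sub (a b : ℝ) {l : ℝ} (hl : l ≠ 0) :
    ∫ s in a..b, exp (-l * (b - s)) = (1 - exp (-l * (b - a))) / l := by
  have hderiv : ∀ s ∈ uIcc a b,
      HasDerivAt (fun u => exp (-l * (b - u)) / l) (exp (-l * (b - s))) s := fun s _ =>
    ((((hasDerivAt_id s).const_sub b).const_mul (-l)).exp.div_const l).congr_deriv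
      (by simp [field])
  rw [integral_eq_sub_of_hasDerivAt hderiv (Continuous.intervalIntegrable (by fun_prop) a b)]
  simp [sub_div]

theorem integral_exp_neg_mul_sub_le (a b : ℝ) {l : ℝ} (hl : 0 < l) :
    ∫ s in a..b, exp (-l * (b - s)) ≤ 1 / l := by
  rw [integral_exp_neg_mul_sub a b hl.ne']
  gcongr
  linarith [exp_pos (-l * (b - a))]

theorem integral_exp_neg_mul_sub_mul_le {x : ℝ → ℝ} {a b l M : ℝ} (hl : 0 < l) (hab : a ≤ b)
    (hx : ContinuousOn x (Icc a b)) (hxM : ∀ s ∈ Icc a b, x s ≤ M) (hM : 0 ≤ M) :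
    ∫ s in a..b, exp (-l * (b - s)) * x s ≤ M / l :=
  calc ∫ s in a..b, exp (-l * (b - s)) * x s
      ≤ ∫ s in a..b, exp (-l * (b - s)) * M := by
        refine integral_mono_on hab ?_ (Continuous.intervalIntegrable (by fun_prop) a b)
          fun s hs => mul_le_mul_of_nonneg_left (hxM s hs) (exp_pos _).le
        refine ContinuousOn.intervalIntegrable ?_
        rw [uIcc_of_le hab]
        fun_prop
    _ = (∫ s in a..b, exp (-l * (b - s))) * M := integral_mul_const M _
    _ ≤ 1 / l * M := by gcongr; exact integral_exp_neg_mul_sub_le a b hl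
    _ = M / l := by ring

theorem le_mul_div_sub_of_le_add_mul_div {y α l1 l2 : ℝ} (hl12 : l2 < l1) (hl1 : 0 < l1)
    (h : y ≤ α + l2 * (y / l1)) : y ≤ α * l1 / (l1 - l2) := by
  rw [le_div_iff₀ (sub_pos.2 hl12)]
  have := mul_le_mul_of_nonneg_right h hl1.le
  field_simp at this
  linarith

theorem ito_nisio_gronwall_2_general
    (x : ℝ → ℝ) (α l1 l2 : ℝ)
    (hx : ContinuousOn x (Set.Ici 0))
    (hxpos : ∀ t, 0 ≤ t → 0 ≤ x t)
    (hl2 : 0 < l2) (hl12 : l2 < l1)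
    (hineq : ∀ t, 0 ≤ t →
      x t ≤ α + l2 * ∫ s in (0:ℝ)..t, Real.exp (-l1 * (t - s)) * x s) :
    ∀ t, 0 ≤ t → x t ≤ α * l1 / (l1 - l2) := by
  intro t ht
  have hl1 : 0 < l1 := hl2.trans hl12
  obtain ⟨c, ⟨hc0, hct⟩, hmax⟩ :=
    isCompact_Icc.exists_isMaxOn (nonempty_Icc.2 ht) (hx.mono Icc_subset_Ici_self)
  have hintegral : ∫ s in (0:ℝ)..c, exp (-l1 * (c - s)) * x s ≤ x c / l1 :=
    integral_exp_neg_mul_sub_mul_le hl1 hc0 (hx.mono Icc_subset_Ici_self)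
      (fun s hs => hmax ⟨hs.1, hs.2.trans hct⟩) (hxpos c hc0)
  calc x t ≤ x c := hmax ⟨ht, le_rfl⟩
    _ ≤ α * l1 / (l1 - l2) :=
      le_mul_div_sub_of_le_add_mul_div hl12 hl1 <| (hineq c hc0).trans (by gcongr)

/-- Itô–Nisio Lemma 8.2 (Gronwall-type uniform bound). -/
theorem ito_nisio_gronwall_2
    (x : ℝ → ℝ) (α l1 l2 : ℝ)
    (hx : ContinuousOn x (Set.Ici 0))
    (hxpos : ∀ t, 0 ≤ t → 0 ≤ x t)
    (hα : 0 < α) (hl2 : 0 < l2) (hl12 : l2 < l1)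
    (hineq : ∀ t, 0 ≤ t →
      x t ≤ α + l2 * ∫ s in (0:ℝ)..t, Real.exp (-l1 * (t - s)) * x s) :
    ∀ t, 0 ≤ t → x t ≤ α * l1 / (l1 - l2) :=
  ito_nisio_gronwall_2_general x α l1 l2 hx hxpos hl2 hl12 hineq
end

section
/- Let S be a nondecreasing càdlàg function on [−r,∞), X a càdlàg locally bounded function, and f_μ, f_ν nonnegative continuous functions supported on [−p,0] and [−q,0] respectively, with F_μ, F_ν the associated Volterra kernels F(t,s) = ∫_{[max(−p∨−q, s−t), min(s,0)]} f(u)du. Then the function Ξ(t) = ∫ F_μ(t,s) X(s) ds + ∫ F_ν(t,s) X(s−) dS(s) is locally Lipschitz continuous on [0,∞): for all t₁, t₂ in a compact interval [0,T], |Ξ(t₂) − Ξ(t₁)| ≤ 2(‖f_μ‖_∞ ∫_{−p}^{T}|X(s)|ds + ‖f_ν‖_∞ ∫_{(−q,T]}|X(s−)|dS(s)) |t₂ − t₁|. -/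
/-!
Both terms of `Ξ` have the form `t ↦ ∫_{(-c,t]} F(t,s) Y(s) dμ(s)`. Since `f` vanishes on
`(0,∞)`, the kernel `F(t,·)` vanishes beyond `t`, so for `t₁, t₂ ≤ T` both integrals may be taken
over `(-c,T]`. There `F(t₂,s) - F(t₁,s)` is the integral of `f` between `max(-c, s-t₂)` and
`max(-c, s-t₁)`, an interval of length at most `|t₂ - t₁|`, so each term changes by at
most `‖f‖_∞ |t₂ - t₁| ∫_{(-c,T]} |Y| dμ`. Local boundedness of `X`, which passes to its left
limits, makes all integrals finite.
-/

open MeasureTheory intervalIntegral Set Filter Topology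

lemma continuous_intervalIntegral_comp {f a b : ℝ → ℝ} (hf : Continuous f) (ha : Continuous a)
    (hb : Continuous b) : Continuous fun s => ∫ u in a s..b s, f u := by
  have hG : Continuous fun x => ∫ u in (0 : ℝ)..x, f u :=
    continuous_primitive (fun _ _ => hf.intervalIntegrable _ _) 0
  have h : (fun s => ∫ u in a s..b s, f u) =
      fun s => (∫ u in (0 : ℝ)..b s, f u) - ∫ u in (0 : ℝ)..a s, f u :=
    funext fun s => (integral_interval_sub_left (hf.intervalIntegrable _ _)
      (hf.intervalIntegrable _ _)).symm
  rw [h]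
  exact (hG.comp hb).sub (hG.comp ha)

lemma abs_le_of_tendsto_nhdsLT {X : ℝ → ℝ} {l a b s C : ℝ}
    (hlim : Tendsto X (𝓝[<] s) (𝓝 l)) (hs : s ∈ Ioc a b) (hC : ∀ t ∈ Icc a b, |X t| ≤ C) :
    |l| ≤ C := by
  refine le_of_tendsto ((continuous_abs.tendsto l).comp hlim) ?_
  filter_upwards [nhdsWithin_le_nhds (Ioi_mem_nhds hs.1), self_mem_nhdsWithin]
    with t hat hts
  exact hC t ⟨le_of_lt hat, (le_of_lt hts).trans hs.2⟩

section IocIntegral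

variable {μ : Measure ℝ} {a T : ℝ}

lemma integrableOn_Ioc_of_abs_le [IsLocallyFiniteMeasure μ] {Y : ℝ → ℝ} {C : ℝ}
    (hY : Measurable Y) (hC : ∀ s ∈ Ioc a T, |Y s| ≤ C) : IntegrableOn Y (Ioc a T) μ :=
  Measure.integrableOn_of_bounded measure_Ioc_lt_top.ne hY.aestronglyMeasurable
    (ae_restrict_of_forall_mem measurableSet_Ioc hC)

lemma setIntegral_Ioc_eq_of_eq_zero_of_lt {g : ℝ → ℝ} {t : ℝ} (htT : t ≤ T)
    (hg : ∀ s, t < s → g s = 0) : ∫ s in Ioc a t, g s ∂μ = ∫ s in Ioc a T, g s ∂μ :=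
  (setIntegral_eq_of_subset_of_forall_sdiff_eq_zero measurableSet_Ioc
    (Ioc_subset_Ioc_right htT) fun s hs => hg s (not_le.mp fun h => hs.2 ⟨hs.1.1, h⟩)).symm

lemma abs_setIntegral_mul_sub_le {K₁ K₂ Y : ℝ → ℝ} {t₁ t₂ L : ℝ}
    (hK₁ : Continuous K₁) (hK₂ : Continuous K₂) (hY : IntegrableOn Y (Ioc a T) μ)
    (ht₁ : t₁ ≤ T) (ht₂ : t₂ ≤ T)
    (hK₁_zero : ∀ s, t₁ < s → K₁ s = 0) (hK₂_zero : ∀ s, t₂ < s → K₂ s = 0)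
    (hL : ∀ s, |K₂ s - K₁ s| ≤ L) :
    |(∫ s in Ioc a t₂, K₂ s * Y s ∂μ) - ∫ s in Ioc a t₁, K₁ s * Y s ∂μ| ≤
      L * ∫ s in Ioc a T, |Y s| ∂μ := by
  have hint : ∀ K : ℝ → ℝ, Continuous K → IntegrableOn (fun s => K s * Y s) (Ioc a T) μ :=
    fun K hK => hY.continuousOn_mul_of_subset hK.continuousOn isCompact_Icc measurableSet_Ioc
      Ioc_subset_Icc_self
  rw [setIntegral_Ioc_eq_of_eq_zero_of_lt ht₂ fun s hs => by simp [hK₂_zero s hs],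
    setIntegral_Ioc_eq_of_eq_zero_of_lt ht₁ fun s hs => by simp [hK₁_zero s hs],
    ← integral_sub (hint K₂ hK₂) (hint K₁ hK₁), ← MeasureTheory.integral_const_mul,
    ← Real.norm_eq_abs]
  refine norm_integral_le_of_norm_le (hY.norm.const_mul L)
    (ae_of_all _ fun s => ?_)
  rw [← sub_mul, norm_mul, Real.norm_eq_abs, Real.norm_eq_abs]
  exact mul_le_mul_of_nonneg_right (hL s) (abs_nonneg _)

end IocIntegral

noncomputable def volterraKernel (f : ℝ → ℝ) (c t s : ℝ) : ℝ :=
  ∫ u in max (-c) (s - t)..min s 0, f u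

namespace volterraKernel

variable {f : ℝ → ℝ} {c : ℝ}

lemma continuous (hf : Continuous f) (t : ℝ) : Continuous (volterraKernel f c t) :=
  continuous_intervalIntegral_comp hf (continuous_const.max (continuous_id.sub continuous_const))
    (continuous_id.min continuous_const)

lemma eq_zero_of_lt (hf : ∀ u, 0 < u → f u = 0) {t s : ℝ} (ht : 0 ≤ t) (hts : t < s) :
    volterraKernel f c t s = 0 := by
  have hpos : 0 < max (-c) (s - t) := lt_max_of_lt_right (sub_pos.mpr hts)
  rw [volterraKernel, min_eq_right (ht.trans hts.le)]
  refine integral_zero_ae (ae_of_all _ fun u hu => hf u ?_)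
  rw [uIoc_of_ge hpos.le] at hu
  exact hu.1

lemma abs_sub_le (hf : Continuous f) {M : ℝ} (hM : ∀ u, |f u| ≤ M) (t₁ t₂ s : ℝ) :
    |volterraKernel f c t₂ s - volterraKernel f c t₁ s| ≤ M * |t₂ - t₁| := by
  have hdiff : volterraKernel f c t₂ s - volterraKernel f c t₁ s =
      ∫ u in max (-c) (s - t₂)..max (-c) (s - t₁), f u := by
    rw [volterraKernel, volterraKernel, integral_interval_sub_interval_comm
      (hf.intervalIntegrable _ _) (hf.intervalIntegrable _ _) (hf.intervalIntegrable _ _),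
      integral_same, sub_zero]
  have hlen : |max (-c) (s - t₁) - max (-c) (s - t₂)| ≤ |t₂ - t₁| := by
    simpa only [max_comm (-c), sub_sub_sub_cancel_left] using
      abs_max_sub_max_le_abs (s - t₁) (s - t₂) (-c)
  rw [hdiff, ← Real.norm_eq_abs]
  exact (norm_integral_le_of_norm_le_const fun u _ => hM u).trans
    (mul_le_mul_of_nonneg_left hlen ((abs_nonneg _).trans (hM 0)))

lemma abs_setIntegral_mul_sub_le {μ : Measure ℝ} (hf : Continuous f)
    (hf_pos : ∀ u, 0 < u → f u = 0) {M : ℝ} (hM : ∀ u, |f u| ≤ M) {Y : ℝ → ℝ} {T : ℝ}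
    (hY : IntegrableOn Y (Ioc (-c) T) μ) {t₁ t₂ : ℝ} (ht₁ : t₁ ∈ Icc 0 T)
    (ht₂ : t₂ ∈ Icc 0 T) :
    |(∫ s in Ioc (-c) t₂, volterraKernel f c t₂ s * Y s ∂μ) -
        ∫ s in Ioc (-c) t₁, volterraKernel f c t₁ s * Y s ∂μ| ≤
      M * |t₂ - t₁| * ∫ s in Ioc (-c) T, |Y s| ∂μ :=
  _root_.abs_setIntegral_mul_sub_le (continuous hf t₁) (continuous hf t₂) hY ht₁.2 ht₂.2
    (fun _ => eq_zero_of_lt hf_pos ht₁.1) (fun _ => eq_zero_of_lt hf_pos ht₂.1)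
    (abs_sub_le hf hM t₁ t₂)

end volterraKernel

theorem Xi_locally_lipschitz_general
    (p q : ℝ) (hp : 0 < p)
    (S : StieltjesFunction ℝ)
    (X Xl : ℝ → ℝ)
    (hX_meas : Measurable X) (hXl_meas : Measurable Xl)
    (hXl : ∀ t, Filter.Tendsto X (nhdsWithin t (Set.Iio t)) (nhds (Xl t)))
    (hX_locbdd : ∀ T : ℝ, ∃ C : ℝ, ∀ t ∈ Set.Icc (-(max p q)) T, |X t| ≤ C)
    (fμ fν : ℝ → ℝ) (Mμ Mν : ℝ)
    (hfμ_cont : Continuous fμ) (hfν_cont : Continuous fν)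
    (hfμ_nonneg : ∀ u, 0 ≤ fμ u) (hfν_nonneg : ∀ u, 0 ≤ fν u)
    (hfμ_supp : ∀ u, u ∉ Set.Icc (-p) 0 → fμ u = 0)
    (hfν_supp : ∀ u, u ∉ Set.Icc (-q) 0 → fν u = 0)
    (hMμ : ∀ u, fμ u ≤ Mμ) (hMν : ∀ u, fν u ≤ Mν) :
    ∀ T : ℝ, 0 < T → ∀ t₁ ∈ Set.Icc (0:ℝ) T, ∀ t₂ ∈ Set.Icc (0:ℝ) T,
      |((∫ s in (-p)..t₂, (∫ u in (max (-p) (s - t₂))..(min s 0), fμ u) * X s) +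
          ∫ s in Set.Ioc (-q) t₂, (∫ u in (max (-q) (s - t₂))..(min s 0), fν u) * Xl s
            ∂S.measure) -
        ((∫ s in (-p)..t₁, (∫ u in (max (-p) (s - t₁))..(min s 0), fμ u) * X s) +
          ∫ s in Set.Ioc (-q) t₁, (∫ u in (max (-q) (s - t₁))..(min s 0), fν u) * Xl s
            ∂S.measure)|
      ≤ 2 * (Mμ * (∫ s in (-p)..T, |X s|) +
              Mν * ∫ s in Set.Ioc (-q) T, |Xl s| ∂S.measure) * |t₂ - t₁| := by
  intro T hT t₁ ht₁ t₂ ht₂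
  obtain ⟨C, hC⟩ := hX_locbdd T
  have hX_int : IntegrableOn X (Ioc (-p) T) := integrableOn_Ioc_of_abs_le hX_meas
    fun s hs => hC s ⟨(neg_le_neg (le_max_left p q)).trans hs.1.le, hs.2⟩
  have hXl_int : IntegrableOn Xl (Ioc (-q) T) S.measure := integrableOn_Ioc_of_abs_le hXl_meas
    fun s hs => abs_le_of_tendsto_nhdsLT (hXl s)
      ⟨(neg_le_neg (le_max_right p q)).trans_lt hs.1, hs.2⟩ hC
  have hμ := volterraKernel.abs_setIntegral_mul_sub_le hfμ_cont
    (fun u hu => hfμ_supp u fun h => hu.not_ge h.2)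
    (fun u => (abs_of_nonneg (hfμ_nonneg u)).trans_le (hMμ u)) hX_int ht₁ ht₂
  have hν := volterraKernel.abs_setIntegral_mul_sub_le hfν_cont
    (fun u hu => hfν_supp u fun h => hu.not_ge h.2)
    (fun u => (abs_of_nonneg (hfν_nonneg u)).trans_le (hMν u)) hXl_int ht₁ ht₂
  simp only [volterraKernel] at hμ hν
  rw [integral_of_le (by linarith [ht₂.1]), integral_of_le (by linarith [ht₁.1]),
    integral_of_le (by linarith)]
  have hμ_nonneg : 0 ≤ Mμ * (∫ s in Ioc (-p) T, |X s|) * |t₂ - t₁| :=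
    mul_nonneg (mul_nonneg ((hfμ_nonneg 0).trans (hMμ 0))
      (setIntegral_nonneg measurableSet_Ioc fun _ _ => abs_nonneg _)) (abs_nonneg _)
  have hν_nonneg : 0 ≤ Mν * (∫ s in Ioc (-q) T, |Xl s| ∂S.measure) * |t₂ - t₁| :=
    mul_nonneg (mul_nonneg ((hfν_nonneg 0).trans (hMν 0))
      (setIntegral_nonneg measurableSet_Ioc fun _ _ => abs_nonneg _)) (abs_nonneg _)
  obtain ⟨hμ_lower, hμ_upper⟩ := abs_le.mp hμ
  obtain ⟨hν_lower, hν_upper⟩ := abs_le.mp hν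
  exact abs_le.mpr ⟨by linarith, by linarith⟩

/-- Pathwise local Lipschitz continuity of the convoluted process
`Ξ(t) = ∫ F_μ(t,s) X(s) ds + ∫ F_ν(t,s) X(s−) dS(s)` (Proposition 4.4(b)). -/
theorem Xi_locally_lipschitz
    (p q : ℝ) (hp : 0 < p) (hq : 0 < q)
    (S : StieltjesFunction ℝ)
    (X Xl : ℝ → ℝ)
    (hX_meas : Measurable X) (hXl_meas : Measurable Xl)
    (hX_rc : ∀ t, ContinuousWithinAt X (Set.Ici t) t)
    (hXl : ∀ t, Filter.Tendsto X (nhdsWithin t (Set.Iio t)) (nhds (Xl t)))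
    (hX_locbdd : ∀ T : ℝ, ∃ C : ℝ, ∀ t ∈ Set.Icc (-(max p q)) T, |X t| ≤ C)
    (fμ fν : ℝ → ℝ) (Mμ Mν : ℝ)
    (hfμ_cont : Continuous fμ) (hfν_cont : Continuous fν)
    (hfμ_nonneg : ∀ u, 0 ≤ fμ u) (hfν_nonneg : ∀ u, 0 ≤ fν u)
    (hfμ_supp : ∀ u, u ∉ Set.Icc (-p) 0 → fμ u = 0)
    (hfν_supp : ∀ u, u ∉ Set.Icc (-q) 0 → fν u = 0)
    (hMμ : ∀ u, fμ u ≤ Mμ) (hMν : ∀ u, fν u ≤ Mν) :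
    ∀ T : ℝ, 0 < T → ∀ t₁ ∈ Set.Icc (0:ℝ) T, ∀ t₂ ∈ Set.Icc (0:ℝ) T,
      |((∫ s in (-p)..t₂, (∫ u in (max (-p) (s - t₂))..(min s 0), fμ u) * X s) +
          ∫ s in Set.Ioc (-q) t₂, (∫ u in (max (-q) (s - t₂))..(min s 0), fν u) * Xl s
            ∂S.measure) -
        ((∫ s in (-p)..t₁, (∫ u in (max (-p) (s - t₁))..(min s 0), fμ u) * X s) +
          ∫ s in Set.Ioc (-q) t₁, (∫ u in (max (-q) (s - t₁))..(min s 0), fν u) * Xl s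
            ∂S.measure)|
      ≤ 2 * (Mμ * (∫ s in (-p)..T, |X s|) +
              Mν * ∫ s in Set.Ioc (-q) T, |Xl s| ∂S.measure) * |t₂ - t₁| :=
  Xi_locally_lipschitz_general p q hp S X Xl hX_meas hXl_meas hXl hX_locbdd fμ fν Mμ Mν hfμ_cont
    hfν_cont hfμ_nonneg hfν_nonneg hfμ_supp hfν_supp hMμ hMν
end

section
/- Under the setup of the pathwise CDGARCH equation with S a nondecreasing càdlàg step function with finitely many jumps on compacts: suppose η > 0, c_μ > ‖f_μ‖_{L¹}, f_ν ≥ 0, c_ν > 0, and let x⁻ = η/(c_μ − ‖f_μ‖_{L¹}) > 0. If the initial segment satisfies X_u ≥ x⁻ for all u ∈ [−r,0], then X_t ≥ x⁻ for all t > 0. -/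
open MeasureTheory intervalIntegral

open Filter

/-- A càdlàg real function is bounded on compact intervals. -/
lemma cadlag_bounded (X Xl : ℝ → ℝ)
    (hX_rc : ∀ t, ContinuousWithinAt X (Set.Ici t) t)
    (hXl : ∀ t, Filter.Tendsto X (nhdsWithin t (Set.Iio t)) (nhds (Xl t)))
    (a b : ℝ) : ∃ M, ∀ s ∈ Set.Icc a b, |X s| ≤ M := by
  by_contra hcon
  push_neg at hcon
  have hsel : ∀ n : ℕ, ∃ s, s ∈ Set.Icc a b ∧ (n : ℝ) < |X s| := fun n => hcon n
  choose u hu hub using hsel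
  obtain ⟨t₀, ht₀, φ, hφ, hconv⟩ := isCompact_Icc.tendsto_subseq hu
  have key : ∀ (ψ : ℕ → ℕ) (L : ℝ), StrictMono ψ →
      Tendsto (fun n => X (u (φ (ψ n)))) atTop (nhds L) → False := by
    intro ψ L hψ hL
    have h1 : Tendsto (fun n => |X (u (φ (ψ n)))|) atTop (nhds |L|) :=
      hL.abs
    have h2 : Tendsto (fun n => |X (u (φ (ψ n)))|) atTop atTop := by
      apply tendsto_atTop_mono (fun n => (hub (φ (ψ n))).le)
      exact tendsto_natCast_atTop_atTop.comp
        ((StrictMono.tendsto_atTop (hφ.comp hψ)))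
    exact not_tendsto_atTop_of_tendsto_nhds h1 h2
  by_cases hc : ∃ᶠ n in atTop, u (φ n) < t₀
  · obtain ⟨ψ, hψ, hlt⟩ := Filter.extraction_of_frequently_atTop hc
    have htend : Tendsto (fun n => u (φ (ψ n))) atTop (nhdsWithin t₀ (Set.Iio t₀)) := by
      rw [tendsto_nhdsWithin_iff]
      exact ⟨hconv.comp hψ.tendsto_atTop, Filter.Eventually.of_forall hlt⟩
    exact key ψ (Xl t₀) hψ ((hXl t₀).comp htend)
  · rw [Filter.not_frequently] at hc
    have hc' : ∀ᶠ n in atTop, t₀ ≤ u (φ n) := hc.mono (fun n h => not_lt.1 h)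
    have htend : Tendsto (fun n => u (φ n)) atTop (nhdsWithin t₀ (Set.Ici t₀)) := by
      rw [tendsto_nhdsWithin_iff]
      exact ⟨hconv, hc'⟩
    exact key id (X t₀) strictMono_id ((hX_rc t₀).tendsto.comp htend)

/-- The left-limit function of a càdlàg function is measurable. -/
lemma cadlag_left_limit_measurable (X Xl : ℝ → ℝ) (hX_meas : Measurable X)
    (hXl : ∀ t, Filter.Tendsto X (nhdsWithin t (Set.Iio t)) (nhds (Xl t))) :
    Measurable Xl := by
  have hseq : ∀ t : ℝ, Tendsto (fun n : ℕ => X (t - 1 / (n + 1))) atTop (nhds (Xl t)) := by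
    intro t
    apply (hXl t).comp
    rw [tendsto_nhdsWithin_iff]
    constructor
    · have : Tendsto (fun n : ℕ => 1 / ((n : ℝ) + 1)) atTop (nhds 0) :=
        tendsto_one_div_add_atTop_nhds_zero_nat
      simpa using (tendsto_const_nhds.sub this)
    · refine Filter.Eventually.of_forall (fun n => ?_)
      simp only [Set.mem_Iio]
      have : (0:ℝ) < 1 / ((n:ℝ) + 1) := by positivity
      linarith
  exact measurable_of_tendsto_metrizable
    (fun n => hX_meas.comp (measurable_id.sub measurable_const))
    (tendsto_pi_nhds.2 hseq)

set_option maxHeartbeats 2000000 in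
/-- Positivity of the CDGARCH variance process driven by a step-function noise:
if the initial segment is bounded below by `x⁻ = η/(c_μ − ‖f_μ‖₁)`, then so is
the whole path (Proposition 4.9 / Theorem 4.14). -/
theorem cdgarch_positivity
    (p q η cμ cν : ℝ) (hp : 0 < p) (hq : 0 < q)
    (hη : 0 < η) (hcμ : 0 < cμ) (hcν : 0 < cν)
    (fμ fν : ℝ → ℝ)
    (hfμ_cont : Continuous fμ) (hfν_cont : Continuous fν)
    (hfμ_nonneg : ∀ u, 0 ≤ fμ u) (hfν_nonneg : ∀ u, 0 ≤ fν u)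
    (hfμ_supp : ∀ u, u ∉ Set.Icc (-p) 0 → fμ u = 0)
    (hfν_supp : ∀ u, u ∉ Set.Icc (-q) 0 → fν u = 0)
    (hfνq : fν (-q) = 0)
    (hcμ_norm : (∫ u in (-p)..0, fμ u) < cμ)
    (S : StieltjesFunction ℝ) (Sl : ℝ → ℝ)
    (hSl : ∀ t, Filter.Tendsto S (nhdsWithin t (Set.Iio t)) (nhds (Sl t)))
    (T : ℕ → ℝ) (hT_mono : StrictMono T) (hT0 : -(max p q) < T 0)
    (hT_top : Filter.Tendsto T Filter.atTop Filter.atTop)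
    (hS_step0 : ∀ t₁ t₂ : ℝ, t₁ < T 0 → t₂ < T 0 → S t₁ = S t₂)
    (hS_step : ∀ j : ℕ, ∀ t₁ ∈ Set.Ico (T j) (T (j + 1)),
      ∀ t₂ ∈ Set.Ico (T j) (T (j + 1)), S t₁ = S t₂)
    (X Xl : ℝ → ℝ)
    (hX_meas : Measurable X)
    (hX_rc : ∀ t, ContinuousWithinAt X (Set.Ici t) t)
    (hXl : ∀ t, Filter.Tendsto X (nhdsWithin t (Set.Iio t)) (nhds (Xl t)))
    (heq : ∀ t, 0 ≤ t →
      X t = X 0 +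
        (∫ s in (0:ℝ)..t,
          (η - cμ * X s + ((∫ u in (-p)..0, fμ u * X (s + u)) +
            ∫ v in Set.Ioc (s - q) s, fν (v - s) * Xl v ∂S.measure))) +
        cν * ∫ s in Set.Ioc 0 t, Xl s ∂S.measure)
    (hinit : ∀ u ∈ Set.Icc (-(max p q)) 0,
      η / (cμ - ∫ v in (-p)..0, fμ v) ≤ X u) :
    ∀ t, 0 < t → η / (cμ - ∫ v in (-p)..0, fμ v) ≤ X t := by
  -- basic quantities
  set b : ℝ := ∫ u in (-p)..0, fμ u with hb_def
  have hb0 : 0 ≤ b := intervalIntegral.integral_nonneg (by linarith) (fun u _ => hfμ_nonneg u)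
  set xm : ℝ := η / (cμ - b) with hxm_def
  have hcb : 0 < cμ - b := by linarith
  have hxm_pos : 0 < xm := div_pos hη hcb
  have hxm_eq : η = (cμ - b) * xm := by
    rw [hxm_def]; field_simp
  by_contra hcon
  push_neg at hcon
  obtain ⟨t₀, ht₀pos, ht₀⟩ := hcon
  -- margins
  set ε : ℝ := min ((xm - X t₀)/2) (xm/2) with hε_def
  have hε_pos : 0 < ε := lt_min (by linarith) (by linarith)
  have hε_xm : ε < xm := lt_of_le_of_lt (min_le_right _ _) (by linarith)
  have ht₀' : X t₀ < xm - ε :=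
    calc X t₀ = xm - (xm - X t₀) := by ring
    _ ≤ xm - 2*ε := by have := min_le_left ((xm - X t₀)/2) (xm/2); linarith
    _ < xm - ε := by linarith
  set δ : ℝ := ε * (cμ + b) / (2 * cμ) with hδ_def
  have hδ_pos : 0 < δ := by positivity
  have hδ_lt : δ < ε := by
    rw [hδ_def, div_lt_iff₀ (by positivity)]
    nlinarith
  set κ : ℝ := cμ * δ - b * ε with hκ_def
  have hκ_pos : 0 < κ := by
    rw [hκ_def, hδ_def]
    have : cμ * (ε * (cμ + b) / (2 * cμ)) = ε * (cμ + b) / 2 := by field_simp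
    rw [this]; nlinarith
  set c₁ : ℝ := xm - ε with hc₁_def
  set c₂ : ℝ := xm - δ with hc₂_def
  have hc₁_pos : 0 < c₁ := by
    have := min_le_right ((xm - X t₀)/2) (xm/2)
    simp only [hc₁_def]; linarith
  have hc₁₂ : c₁ < c₂ := by simp only [hc₁_def, hc₂_def]; linarith
  have hc₂xm : c₂ < xm := by simp only [hc₂_def]; linarith
  -- first crossing time
  set Aset : Set ℝ := {t | 0 < t ∧ X t < c₁} with hAset_def
  have hAne : Aset.Nonempty := ⟨t₀, ht₀pos, ht₀'⟩
  have hAbdd : BddBelow Aset := ⟨0, fun t ht => ht.1.le⟩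
  set ts : ℝ := sInf Aset with hts_def
  have hts0 : 0 ≤ ts := le_csInf hAne (fun t ht => ht.1.le)
  have hpre : ∀ σ, -(max p q) ≤ σ → σ < ts → c₁ ≤ X σ := by
    intro σ hσl hσu
    rcases le_or_gt σ 0 with h0 | h0
    · have := hinit σ ⟨hσl, h0⟩
      simp only [hc₁_def]
      linarith
    · by_contra hlt
      push_neg at hlt
      exact absurd (csInf_le hAbdd ⟨h0, hlt⟩) (not_le.2 hσu)
  have hXts : X ts ≤ c₁ := by
    have hsel : ∀ n : ℕ, ∃ a ∈ Aset, a < ts + 1/(n+1) := by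
      intro n
      apply exists_lt_of_csInf_lt hAne
      have : (0:ℝ) < 1/((n:ℝ)+1) := by positivity
      linarith
    choose a ha hal using hsel
    have hge : ∀ n, ts ≤ a n := fun n => csInf_le hAbdd (ha n)
    have htend : Tendsto a atTop (nhds ts) := by
      have h1 : Tendsto (fun n : ℕ => ts + 1/((n:ℝ)+1)) atTop (nhds ts) := by
        simpa using (tendsto_const_nhds : Tendsto (fun _ : ℕ => ts) atTop (nhds ts)).add tendsto_one_div_add_atTop_nhds_zero_nat
      exact tendsto_of_tendsto_of_tendsto_of_le_of_le tendsto_const_nhds h1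
        hge (fun n => (hal n).le)
    have htend' : Tendsto a atTop (nhdsWithin ts (Set.Ici ts)) := by
      rw [tendsto_nhdsWithin_iff]
      exact ⟨htend, Filter.Eventually.of_forall hge⟩
    have := (hX_rc ts).tendsto.comp htend'
    exact le_of_tendsto this (Filter.Eventually.of_forall (fun n => ((ha n).2).le))
  have hts_pos : 0 < ts := by
    rcases lt_or_eq_of_le hts0 with h | h
    · exact h
    · exfalso
      have hpq : (0:ℝ) ≤ p ⊔ q := le_trans hp.le (le_max_left p q)
      have := hinit 0 ⟨by linarith, le_refl 0⟩
      rw [← h] at hXts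
      simp only [hc₁_def] at hXts
      linarith
  -- from here: analytic estimates
  set R : ℝ := -(max p q) - 1 with hR_def
  have hpq0 : 0 < max p q := lt_max_of_lt_left hp
  have hRneg : R < -(max p q) := by rw [hR_def]; linarith
  have hRts : R ≤ ts := by linarith
  obtain ⟨M₀, hM₀⟩ := cadlag_bounded X Xl hX_rc hXl R ts
  set M : ℝ := max M₀ 0 with hM_def
  have hM0 : 0 ≤ M := le_max_right _ _
  have hM : ∀ s ∈ Set.Icc R ts, |X s| ≤ M := fun s hs => (hM₀ s hs).trans (le_max_left _ _)
  have hXl_bound : ∀ v, -(max p q) < v → v ≤ ts → |Xl v| ≤ M ∧ c₁ ≤ Xl v := by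
    intro v hv1 hv2
    have hev : ∀ᶠ w in nhdsWithin v (Set.Iio v), |X w| ≤ M ∧ c₁ ≤ X w := by
      have h1 : Set.Ioi (-(max p q)) ∈ nhdsWithin v (Set.Iio v) :=
        mem_nhdsWithin_of_mem_nhds (Ioi_mem_nhds hv1)
      filter_upwards [h1, self_mem_nhdsWithin] with w hw1 hw2
      have hw1' : -(max p q) < w := hw1
      have hwv : w < v := hw2
      exact ⟨hM w ⟨by linarith, by linarith⟩,
        hpre w (le_of_lt hw1') (lt_of_lt_of_le hwv hv2)⟩
    exact ⟨le_of_tendsto (hXl v).abs (hev.mono fun w h => h.1),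
      ge_of_tendsto (hXl v) (hev.mono fun w h => h.2)⟩
  -- the drift integrand
  set g : ℝ → ℝ := fun s => η - cμ * X s + ((∫ u in (-p)..0, fμ u * X (s + u)) +
      ∫ v in Set.Ioc (s - q) s, fν (v - s) * Xl v ∂S.measure) with hg_def
  -- measurability
  have hXl_meas : Measurable Xl := cadlag_left_limit_measurable X Xl hX_meas hXl
  have hAf_meas : Measurable (fun s : ℝ => ∫ u in (-p)..0, fμ u * X (s + u)) := by
    have hF : StronglyMeasurable (fun z : ℝ × ℝ => fμ z.2 * X (z.1 + z.2)) :=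
      ((hfμ_cont.measurable.comp measurable_snd).mul
        (hX_meas.comp (measurable_fst.add measurable_snd))).stronglyMeasurable
    have h2 := (hF.integral_prod_right' (ν := volume.restrict (Set.Ioc (-p) 0))).measurable
    have h3 : (fun s : ℝ => ∫ u in (-p)..0, fμ u * X (s + u)) =
        fun s : ℝ => ∫ u, (fun z : ℝ × ℝ => fμ z.2 * X (z.1 + z.2)) (s, u)
          ∂(volume.restrict (Set.Ioc (-p) 0)) := by
      funext s
      rw [intervalIntegral.integral_of_le (by linarith : -p ≤ (0:ℝ))]
    rw [h3]; exact h2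
  have hBf_meas : Measurable (fun s : ℝ =>
      ∫ v in Set.Ioc (s - q) s, fν (v - s) * Xl v ∂S.measure) := by
    set F₂ : ℝ × ℝ → ℝ := fun z =>
      if z.1 - q < z.2 ∧ z.2 ≤ z.1 then fν (z.2 - z.1) * Xl z.2 else 0 with hF₂_def
    have hF₂ : Measurable F₂ := by
      apply Measurable.ite
      · have : {z : ℝ × ℝ | z.1 - q < z.2 ∧ z.2 ≤ z.1} =
            {z : ℝ × ℝ | z.1 - q < z.2} ∩ {z : ℝ × ℝ | z.2 ≤ z.1} := rfl
        rw [this]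
        exact (measurableSet_lt (measurable_fst.sub measurable_const) measurable_snd).inter
          (measurableSet_le measurable_snd measurable_fst)
      · exact (hfν_cont.measurable.comp (measurable_snd.sub measurable_fst)).mul
          (hXl_meas.comp measurable_snd)
      · exact measurable_const
    have h2 := (hF₂.stronglyMeasurable.integral_prod_right' (ν := S.measure)).measurable
    have h3 : (fun s : ℝ => ∫ v in Set.Ioc (s - q) s, fν (v - s) * Xl v ∂S.measure) =
        fun s : ℝ => ∫ v, F₂ (s, v) ∂S.measure := by
      funext s
      rw [← MeasureTheory.integral_indicator measurableSet_Ioc]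
      congr 1
      funext v
      simp [hF₂_def, Set.indicator_apply, Set.mem_Ioc]
    rw [h3]; exact h2
  have hg_meas : Measurable g := by
    rw [hg_def]
    exact (measurable_const.sub (measurable_const.mul hX_meas)).add (hAf_meas.add hBf_meas)
  -- bounds on the coefficient functions
  have hglob : ∀ (f : ℝ → ℝ) (r : ℝ), 0 < r → Continuous f → (∀ u, u ∉ Set.Icc (-r) 0 → f u = 0) →
      ∃ C, 0 ≤ C ∧ ∀ u, |f u| ≤ C := by
    intro f r hr hf hsupp
    obtain ⟨u₀, _, hmax⟩ := (isCompact_Icc : IsCompact (Set.Icc (-r) 0)).exists_isMaxOn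
      ⟨-r, Set.left_mem_Icc.2 (by linarith : -r ≤ (0:ℝ))⟩ (continuous_abs.comp hf).continuousOn
    refine ⟨|f u₀|, abs_nonneg _, fun u => ?_⟩
    by_cases h : u ∈ Set.Icc (-r) 0
    · exact hmax h
    · rw [hsupp u h]; simp
  obtain ⟨Cμf, hCμf0, hCμf⟩ := hglob fμ p hp hfμ_cont hfμ_supp
  obtain ⟨Cν, hCν0, hCν⟩ := hglob fν q hq hfν_cont hfν_supp
  have hpmax : p ≤ max p q := le_max_left p q
  have hqmax : q ≤ max p q := le_max_right p q
  set CS : ℝ := (S.measure (Set.Ioc R (ts + 1))).toReal with hCS_def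
  have hCS0 : 0 ≤ CS := ENNReal.toReal_nonneg
  -- bound on the delay term
  have hAf_bdd : ∀ s, 0 ≤ s → s ≤ ts → |∫ u in (-p)..0, fμ u * X (s + u)| ≤ Cμf * M * p := by
    intro s hs0 hs1
    have hb1 : ∀ u ∈ Set.uIoc (-p) 0, ‖fμ u * X (s + u)‖ ≤ Cμf * M := by
      intro u hu
      rw [Set.uIoc_of_le (by linarith : -p ≤ (0:ℝ))] at hu
      have hXb : |X (s + u)| ≤ M :=
        hM (s + u) ⟨by linarith [hu.1], by linarith [hu.2]⟩
      rw [Real.norm_eq_abs, abs_mul]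
      exact mul_le_mul (hCμf u) hXb (abs_nonneg _) hCμf0
    have h2 := intervalIntegral.norm_integral_le_of_norm_le_const hb1
    rw [Real.norm_eq_abs] at h2
    calc |∫ u in (-p)..0, fμ u * X (s + u)| ≤ Cμf * M * |0 - (-p)| := h2
    _ = Cμf * M * p := by rw [show (0:ℝ) - (-p) = p by ring, abs_of_pos hp]
  -- bound on the jump-memory term
  have hBf_bdd : ∀ s, 0 ≤ s → s ≤ ts →
      |∫ v in Set.Ioc (s - q) s, fν (v - s) * Xl v ∂S.measure| ≤ Cν * M * CS := by
    intro s hs0 hs1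
    have hfin : S.measure (Set.Ioc (s - q) s) < ⊤ := by
      rw [StieltjesFunction.measure_Ioc]; exact ENNReal.ofReal_lt_top
    have hbound : ∀ v ∈ Set.Ioc (s - q) s, ‖fν (v - s) * Xl v‖ ≤ Cν * M := by
      intro v hv
      have hXlb : |Xl v| ≤ M := (hXl_bound v (by linarith [hv.1]) (by linarith [hv.2])).1
      rw [Real.norm_eq_abs, abs_mul]
      exact mul_le_mul (hCν _) hXlb (abs_nonneg _) hCν0
    have hmeas : AEStronglyMeasurable (fun v => fν (v - s) * Xl v)
        (S.measure.restrict (Set.Ioc (s - q) s)) :=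
      ((hfν_cont.measurable.comp (measurable_id.sub measurable_const)).mul
        hXl_meas).aestronglyMeasurable
    have h2 := norm_setIntegral_le_of_norm_le_const hfin hbound
    rw [Real.norm_eq_abs] at h2
    refine h2.trans ?_
    have hsub : Set.Ioc (s - q) s ⊆ Set.Ioc R (ts + 1) := by
      apply Set.Ioc_subset_Ioc <;> linarith
    have hmono : (S.measure (Set.Ioc (s - q) s)).toReal ≤ CS := by
      rw [hCS_def]
      apply ENNReal.toReal_mono
      · rw [StieltjesFunction.measure_Ioc]; exact ENNReal.ofReal_ne_top
      · exact measure_mono hsub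
    exact mul_le_mul_of_nonneg_left hmono (by positivity)
  -- bound on g
  set Cg : ℝ := |η| + cμ * M + (Cμf * M * p + Cν * M * CS) with hCg_def
  have hCg0 : 0 ≤ Cg := by positivity
  have hg_bdd : ∀ s, 0 ≤ s → s ≤ ts → |g s| ≤ Cg := by
    intro s hs0 hs1
    have h1 : |X s| ≤ M := hM s ⟨by linarith, hs1⟩
    have h2 := hAf_bdd s hs0 hs1
    have h3 := hBf_bdd s hs0 hs1
    have e : g s = η - cμ * X s + ((∫ u in (-p)..0, fμ u * X (s + u)) +
        ∫ v in Set.Ioc (s - q) s, fν (v - s) * Xl v ∂S.measure) := by rw [hg_def]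
    rw [e, hCg_def]
    have habs1 : |η - cμ * X s| ≤ |η| + cμ * M := by
      rw [sub_eq_add_neg]
      refine (abs_add_le _ _).trans ?_
      rw [abs_neg, abs_mul, abs_of_pos hcμ]
      have := mul_le_mul_of_nonneg_left h1 hcμ.le
      linarith
    refine (abs_add_le _ _).trans ?_
    have := (abs_add_le (∫ u in (-p)..0, fμ u * X (s + u))
      (∫ v in Set.Ioc (s - q) s, fν (v - s) * Xl v ∂S.measure))
    linarith
  -- interval integrability of g
  have hg_intOn : IntegrableOn g (Set.Icc 0 ts) volume := by
    apply Measure.integrableOn_of_bounded (M := Cg)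
    · rw [Real.volume_Icc]; exact ENNReal.ofReal_ne_top
    · exact hg_meas.aestronglyMeasurable
    · rw [ae_restrict_iff' measurableSet_Icc]
      exact Filter.Eventually.of_forall fun s hs => by
        simpa [Real.norm_eq_abs] using hg_bdd s hs.1 hs.2
  have hg_int : ∀ a' b', 0 ≤ a' → a' ≤ b' → b' ≤ ts → IntervalIntegrable g volume a' b' := by
    intro a' b' h1 h2 h3
    apply IntegrableOn.intervalIntegrable
    apply hg_intOn.mono_set
    rw [Set.uIcc_of_le h2]
    exact Set.Icc_subset_Icc (by linarith) h3
  -- integrability of Xl against the Stieltjes measure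
  have hXl_intOn : ∀ a' b', 0 ≤ a' → b' ≤ ts →
      IntegrableOn Xl (Set.Ioc a' b') S.measure := by
    intro a' b' h1 h2
    apply Measure.integrableOn_of_bounded (M := M)
    · rw [StieltjesFunction.measure_Ioc]; exact ENNReal.ofReal_ne_top
    · exact hXl_meas.aestronglyMeasurable
    · rw [ae_restrict_iff' measurableSet_Ioc]
      refine Filter.Eventually.of_forall fun v hv => ?_
      rw [Real.norm_eq_abs]
      exact (hXl_bound v (by linarith [hv.1]) (by linarith [hv.2])).1
  -- pointwise lower bounds on the drift
  have hA_lb : ∀ s, 0 ≤ s → s < ts → b * c₁ ≤ ∫ u in (-p)..0, fμ u * X (s + u) := by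
    intro s h0 hlt
    have hi1 : IntervalIntegrable (fun u => fμ u * c₁) volume (-p) 0 :=
      (hfμ_cont.mul continuous_const).intervalIntegrable _ _
    have hi2 : IntervalIntegrable (fun u => fμ u * X (s + u)) volume (-p) 0 := by
      apply IntegrableOn.intervalIntegrable
      apply Measure.integrableOn_of_bounded (M := Cμf * M)
      · rw [Set.uIcc_of_le (by linarith : -p ≤ (0:ℝ)), Real.volume_Icc]
        exact ENNReal.ofReal_ne_top
      · exact (hfμ_cont.measurable.mul
          (hX_meas.comp (measurable_const.add measurable_id))).aestronglyMeasurable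
      · rw [ae_restrict_iff' measurableSet_uIcc]
        refine Filter.Eventually.of_forall fun u hu => ?_
        rw [Set.uIcc_of_le (by linarith : -p ≤ (0:ℝ))] at hu
        have hXb : |X (s + u)| ≤ M :=
          hM (s + u) ⟨by linarith [hu.1], by linarith [hu.2, hlt]⟩
        rw [Real.norm_eq_abs, abs_mul]
        exact mul_le_mul (hCμf u) hXb (abs_nonneg _) hCμf0
    have hpt : ∀ u ∈ Set.Icc (-p) 0, fμ u * c₁ ≤ fμ u * X (s + u) := by
      intro u hu
      refine mul_le_mul_of_nonneg_left ?_ (hfμ_nonneg u)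
      exact hpre (s + u) (by linarith [hu.1]) (by linarith [hu.2])
    have h2 := intervalIntegral.integral_mono_on (by linarith : -p ≤ (0:ℝ)) hi1 hi2 hpt
    calc b * c₁ = ∫ u in (-p)..0, fμ u * c₁ := by
          rw [intervalIntegral.integral_mul_const, ← hb_def]
    _ ≤ _ := h2
  have hB_nn : ∀ s, 0 ≤ s → s ≤ ts →
      0 ≤ ∫ v in Set.Ioc (s - q) s, fν (v - s) * Xl v ∂S.measure := by
    intro s h0 hle
    apply setIntegral_nonneg measurableSet_Ioc
    intro v hv
    refine mul_nonneg (hfν_nonneg _) ?_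
    have := (hXl_bound v (by linarith [hv.1]) (by linarith [hv.2])).2
    linarith
  have hg_lb : ∀ s, 0 ≤ s → s < ts → X s ≤ c₂ → κ ≤ g s := by
    intro s h0 hlt hX2
    have h1 := hA_lb s h0 hlt
    have h2 := hB_nn s h0 hlt.le
    have e2 : cμ * X s ≤ cμ * (xm - δ) := by
      have := mul_le_mul_of_nonneg_left hX2 hcμ.le
      rw [hc₂_def] at this
      linarith
    have egs : g s = η - cμ * X s + ((∫ u in (-p)..0, fμ u * X (s + u)) +
        ∫ v in Set.Ioc (s - q) s, fν (v - s) * Xl v ∂S.measure) := by rw [hg_def]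
    rw [egs]
    have e1 : b * c₁ = b * (xm - ε) := by rw [hc₁_def]
    linarith only [hxm_eq, hκ_def, e1, h1, h2, e2]
  -- last excursion above c₂
  set Bset : Set ℝ := {s | s ∈ Set.Icc 0 ts ∧ c₂ < X s} with hBset_def
  have h0B : (0:ℝ) ∈ Bset := by
    refine ⟨⟨le_refl 0, hts0⟩, ?_⟩
    have := hinit 0 ⟨by linarith, le_refl 0⟩
    linarith
  have hBbdd : BddAbove Bset := ⟨ts, fun s hs => hs.1.2⟩
  set s₁ : ℝ := sSup Bset with hs₁_def
  have hs₁0 : 0 ≤ s₁ := le_csSup hBbdd h0B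
  have hs₁ts : s₁ ≤ ts := csSup_le ⟨0, h0B⟩ (fun s hs => hs.1.2)
  have hpost : ∀ σ, s₁ < σ → σ ≤ ts → X σ ≤ c₂ := by
    intro σ h1 h2
    by_contra hgt
    push_neg at hgt
    exact absurd (le_csSup hBbdd ⟨⟨by linarith, h2⟩, hgt⟩) (not_le.2 h1)
  set hstep : ℝ := (ε - δ) / (2 * (Cg + 1)) with hstep_def
  have hstep_pos : 0 < hstep := div_pos (by linarith) (by linarith)
  obtain ⟨s, hsB, hs_gt⟩ := exists_lt_of_lt_csSup ⟨0, h0B⟩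
    (show s₁ - hstep < s₁ by linarith)
  obtain ⟨⟨hs0, hsts⟩, hsX⟩ := hsB
  have hss₁ : s ≤ s₁ := le_csSup hBbdd ⟨⟨hs0, hsts⟩, hsX⟩
  -- the pathwise equation between s and ts
  have e_ts := heq ts hts0
  have e_s := heq s hs0
  have hint1 : IntervalIntegrable g volume 0 s := hg_int 0 s le_rfl hs0 hsts
  have hint2 : IntervalIntegrable g volume s ts := hg_int s ts hs0 hsts le_rfl
  have hint3 : IntervalIntegrable g volume s s₁ := hg_int s s₁ hs0 hss₁ hs₁ts
  have hint4 : IntervalIntegrable g volume s₁ ts := hg_int s₁ ts hs₁0 hs₁ts le_rfl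
  have hadd1 : intervalIntegral g 0 s volume + intervalIntegral g s ts volume
      = intervalIntegral g 0 ts volume :=
    intervalIntegral.integral_add_adjacent_intervals hint1 hint2
  have hadd2 : intervalIntegral g s s₁ volume + intervalIntegral g s₁ ts volume
      = intervalIntegral g s ts volume :=
    intervalIntegral.integral_add_adjacent_intervals hint3 hint4
  have haddS : (∫ v in Set.Ioc 0 ts, Xl v ∂S.measure) =
      (∫ v in Set.Ioc 0 s, Xl v ∂S.measure) + ∫ v in Set.Ioc s ts, Xl v ∂S.measure := by
    rw [← Set.Ioc_union_Ioc_eq_Ioc hs0 hsts]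
    exact setIntegral_union (Set.Ioc_disjoint_Ioc_of_le le_rfl) measurableSet_Ioc
      (hXl_intOn 0 s le_rfl hsts) (hXl_intOn s ts hs0 le_rfl)
  have hjump : 0 ≤ ∫ v in Set.Ioc s ts, Xl v ∂S.measure := by
    apply setIntegral_nonneg measurableSet_Ioc
    intro v hv
    have := (hXl_bound v (by linarith [hv.1]) hv.2).2
    linarith
  have hjump' : 0 ≤ cν * ∫ v in Set.Ioc s ts, Xl v ∂S.measure := mul_nonneg hcν.le hjump
  -- bound on the small leftover interval
  have hbd1 : |intervalIntegral g s s₁ volume| ≤ Cg * hstep := by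
    have hb1 : ∀ σ ∈ Set.uIoc s s₁, ‖g σ‖ ≤ Cg := by
      intro σ hσ
      rw [Set.uIoc_of_le hss₁] at hσ
      rw [Real.norm_eq_abs]
      exact hg_bdd σ (by linarith [hσ.1]) (by linarith [hσ.2])
    have h2 := intervalIntegral.norm_integral_le_of_norm_le_const hb1
    rw [Real.norm_eq_abs] at h2
    refine h2.trans ?_
    have habs : |s₁ - s| ≤ hstep := by
      rw [abs_of_nonneg (by linarith)]; linarith
    exact mul_le_mul_of_nonneg_left habs hCg0
  -- lower bound on the main interval
  have hbd2 : κ * (ts - s₁) ≤ intervalIntegral g s₁ ts volume := by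
    have hconst : IntervalIntegrable (fun _ : ℝ => κ) volume s₁ ts :=
      intervalIntegrable_const
    have hlep : (fun _ : ℝ => κ) ≤ᶠ[ae (volume.restrict (Set.Icc s₁ ts))] g := by
      rw [Filter.EventuallyLE, ae_restrict_iff' measurableSet_Icc]
      have hz : (volume : Measure ℝ) ({s₁, ts} : Set ℝ) = 0 :=
        ((Set.finite_singleton ts).insert s₁).measure_zero volume
      have hae : ∀ᵐ σ ∂(volume : Measure ℝ), σ ∉ ({s₁, ts} : Set ℝ) :=
        compl_mem_ae_iff.2 hz
      filter_upwards [hae] with σ hσ hmem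
      simp only [Set.mem_insert_iff, Set.mem_singleton_iff, not_or] at hσ
      have h1 : s₁ < σ := lt_of_le_of_ne hmem.1 (Ne.symm hσ.1)
      have h2 : σ < ts := lt_of_le_of_ne hmem.2 hσ.2
      exact hg_lb σ (by linarith) h2 (hpost σ h1 h2.le)
    calc κ * (ts - s₁) = ∫ _ in s₁..ts, κ := by
          rw [intervalIntegral.integral_const, smul_eq_mul]; ring
    _ ≤ _ := intervalIntegral.integral_mono_ae_restrict hs₁ts hconst hint4 hlep
  -- assemble the contradiction
  have key : X ts - X s = intervalIntegral g s s₁ volume + intervalIntegral g s₁ ts volume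
      + cν * ∫ v in Set.Ioc s ts, Xl v ∂S.measure := by
    rw [haddS] at e_ts
    rw [← hadd1, ← hadd2] at e_ts
    linarith only [e_ts, e_s]
  have hI1 := (abs_le.1 hbd1).1
  have hts_s₁ : 0 ≤ κ * (ts - s₁) := mul_nonneg hκ_pos.le (by linarith)
  have hCgh : Cg * hstep ≤ (ε - δ) / 2 := by
    rw [hstep_def, mul_div_assoc']
    rw [div_le_div_iff₀ (by linarith : (0:ℝ) < 2 * (Cg + 1)) (by norm_num : (0:ℝ) < 2)]
    linarith only [hδ_lt]
  have step1 : -(Cg * hstep) ≤ X ts - X s := by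
    linarith only [key, hI1, hbd2, hjump', hts_s₁]
  have step2 : X ts ≤ c₁ := hXts
  have hc : c₂ - c₁ = ε - δ := by rw [hc₁_def, hc₂_def]; ring
  clear_value c₁ c₂ δ ε hstep Cg
  linarith only [step1, step2, hsX, hCgh, hc, hδ_lt]
end
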